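/- arXiv:2512.05512 — 4 statements merged into one kernel-verified Lean document; each statement's English description precedes it below -/
import Mathlib

section
/- Symmetry of the Alexander polynomial of a braid closure: let σ ∈ B_n be a braid with exponent sum |σ| (the sum of exponents when σ is written in the generators σ_i), and suppose its closure is a knot, so the polynomial Δ(t) = lim_{s→1} det(s I_n − β_n(σ))/((s−1)·[n]_t) is well-defined, where [n]_t = 1 + t + ⋯ + t^{n−1}. Then Δ(1/t) = (−t)^{−|σ|+n−1} Δ(t). -/
/-!
Squier's form `Ω` (lower unitriangular with `1 - t` below the diagonal) makes the Burau
matrices unitary: `β(σ)(1/t) · Ω · β(σ)ᵀ = Ω`. As `det Ω = 1`, the matrix `β(σ)(1/t)` is conjugate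
to `(β(σ)⁻¹)ᵀ`, so substituting `t ↦ 1/t` in the characteristic polynomial of `β(σ)` gives that of
`β(σ)⁻¹`, which is `(-1)^n det β(σ)⁻¹` times the reversed characteristic polynomial of `β(σ)`.
The reverse of `s - 1` is `1 - s`, so after cancelling this factor and setting `s = 1` we get
`Δ(1/t) [n]_{1/t} det β(σ) = (-1)^{n+1} Δ(t) [n]_t`. Since `det β(σ) = (-t)^{|σ|}` and
`[n]_{1/t} = t^{1-n} [n]_t`, this is the claimed symmetry.
-/

open LaurentPolynomial Polynomial

/-- The (unreduced) Burau matrix of the braid generator `σ_{j+1}` (0-indexed `j`) in `B_n`: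
the block matrix `I_j ⊕ [[1 - t, t], [1, 0]] ⊕ I_{n-j-2}` over `ℤ[t, t⁻¹]`. -/
noncomputable def burau (n j : ℕ) : Matrix (Fin n) (Fin n) (LaurentPolynomial ℤ) :=
  Matrix.of fun i k =>
    if i.1 = j ∧ k.1 = j then 1 - T 1
    else if i.1 = j ∧ k.1 = j + 1 then T 1
    else if i.1 = j + 1 ∧ k.1 = j then 1
    else if i.1 = j + 1 ∧ k.1 = j + 1 then 0
    else if i = k then 1 else 0

/-- The inverse of the Burau matrix of `σ_{j+1}`: the block matrix
`I_j ⊕ [[0, 1], [t⁻¹, 1 - t⁻¹]] ⊕ I_{n-j-2}` over `ℤ[t, t⁻¹]`. -/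
noncomputable def burauInv (n j : ℕ) : Matrix (Fin n) (Fin n) (LaurentPolynomial ℤ) :=
  Matrix.of fun i k =>
    if i.1 = j ∧ k.1 = j then 0
    else if i.1 = j ∧ k.1 = j + 1 then 1
    else if i.1 = j + 1 ∧ k.1 = j then T (-1)
    else if i.1 = j + 1 ∧ k.1 = j + 1 then 1 - T (-1)
    else if i = k then 1 else 0

/-- The Burau matrix of a braid word `w` (a list of generator indices with signs). -/
noncomputable def burauWord (n : ℕ) (w : List (ℕ × Bool)) :
    Matrix (Fin n) (Fin n) (LaurentPolynomial ℤ) :=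
  (w.map fun x => if x.2 then burau n x.1 else burauInv n x.1).prod

open Matrix

section TwoBlock

variable {R : Type*} [CommRing R] {n j : ℕ} {p q r s : R}

def twoBlock (n j : ℕ) (p q r s : R) : Matrix (Fin n) (Fin n) R :=
  Matrix.of fun i k =>
    if i.1 = j ∧ k.1 = j then p
    else if i.1 = j ∧ k.1 = j + 1 then q
    else if i.1 = j + 1 ∧ k.1 = j then r
    else if i.1 = j + 1 ∧ k.1 = j + 1 then s
    else if i = k then 1 else 0

lemma burau_eq_twoBlock : burau n j = twoBlock n j (1 - T 1) (T 1) 1 0 := rfl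

lemma burauInv_eq_twoBlock : burauInv n j = twoBlock n j 0 1 (T (-1)) (1 - T (-1)) := rfl

lemma twoBlock_map {S F : Type*} [CommRing S] [FunLike F R S] [RingHomClass F R S] (f : F) :
    (twoBlock n j p q r s).map f = twoBlock n j (f p) (f q) (f r) (f s) := by
  ext i k
  simp only [twoBlock, map_apply, of_apply]
  split_ifs <;> simp

lemma sum_twoBlock_mul (h : j + 1 < n) (v : Fin n → R) (i : Fin n) :
    ∑ m, twoBlock n j p q r s i m * v m =
      if i.1 = j then p * v ⟨j, by omega⟩ + q * v ⟨j + 1, h⟩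
      else if i.1 = j + 1 then r * v ⟨j, by omega⟩ + s * v ⟨j + 1, h⟩
      else v i := by
  have hab : (⟨j, by omega⟩ : Fin n) ≠ ⟨j + 1, h⟩ := by simp
  split_ifs with hi hi'
  on_goal 3 =>
    rw [Fintype.sum_eq_single i fun m hm => by simp [twoBlock, hi, hi', Ne.symm hm]]
    simp [twoBlock, hi, hi']
  all_goals
    rw [Fintype.sum_eq_add _ _ hab]
    · simp [twoBlock, *]
    · rintro ⟨m, hm⟩ ⟨hma, hmb⟩
      simp only [ne_eq, Fin.mk.injEq] at hma hmb
      simp [twoBlock, *, Fin.ext_iff]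
      omega

lemma twoBlock_mul_apply (h : j + 1 < n) (M : Matrix (Fin n) (Fin n) R) (i k : Fin n) :
    (twoBlock n j p q r s * M) i k =
      if i.1 = j then p * M ⟨j, by omega⟩ k + q * M ⟨j + 1, h⟩ k
      else if i.1 = j + 1 then r * M ⟨j, by omega⟩ k + s * M ⟨j + 1, h⟩ k
      else M i k :=
  sum_twoBlock_mul h (fun m => M m k) i

lemma mul_transpose_twoBlock_apply (h : j + 1 < n) (M : Matrix (Fin n) (Fin n) R) (i k : Fin n) :
    (M * (twoBlock n j p q r s)ᵀ) i k =
      if k.1 = j then p * M i ⟨j, by omega⟩ + q * M i ⟨j + 1, h⟩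
      else if k.1 = j + 1 then r * M i ⟨j, by omega⟩ + s * M i ⟨j + 1, h⟩
      else M i k := by
  rw [mul_apply, ← sum_twoBlock_mul h (M i) k]
  simp only [transpose_apply, mul_comm]

lemma twoBlock_apply_of_ne_zero {i k : Fin n} (hik : i ≠ k) (h0 : twoBlock n j p q r s i k ≠ 0) :
    (i.1 = j ∨ i.1 = j + 1) ∧ (k.1 = j ∨ k.1 = j + 1) := by
  simp only [twoBlock, of_apply, if_neg hik] at h0
  split_ifs at h0 <;> first | omega | exact absurd rfl h0

lemma perm_eq_one_or_swap_of_prod_twoBlock_ne_zero (h : j + 1 < n) {σ : Equiv.Perm (Fin n)}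
    (hσ : ∏ i, twoBlock n j p q r s (σ i) i ≠ 0) :
    σ = 1 ∨ σ = Equiv.swap ⟨j, by omega⟩ ⟨j + 1, h⟩ := by
  set a : Fin n := ⟨j, by omega⟩
  set b : Fin n := ⟨j + 1, h⟩
  have hmoved : ∀ i, σ i ≠ i → (i = a ∨ i = b) ∧ (σ i = a ∨ σ i = b) := fun i hi => by
    have := twoBlock_apply_of_ne_zero hi fun h0 => hσ (Finset.prod_eq_zero (Finset.mem_univ i) h0)
    simp only [a, b, Fin.ext_iff]
    omega
  have hab : a ≠ b := by simp [a, b]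
  by_cases hσa : σ a = a
  · left
    refine Equiv.ext fun i => by_contra fun hi => ?_
    rcases (hmoved i hi).1 with rfl | rfl
    · exact hi hσa
    · rcases (hmoved _ hi).2 with hσb | hσb
      · exact hab (σ.injective (hσb.trans hσa.symm)).symm
      · exact hi hσb
  · right
    have hσa' : σ a = b := ((hmoved a hσa).2).resolve_left hσa
    have hσb : σ b = a :=
      ((hmoved b fun e => hab (σ.injective (hσa'.trans e.symm))).2).resolve_right
        fun e => hab (σ.injective (hσa'.trans e.symm))
    refine Equiv.ext fun i => ?_
    by_cases hia : i = a
    · rw [hia, hσa', Equiv.swap_apply_left]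
    by_cases hib : i = b
    · rw [hib, hσb, Equiv.swap_apply_right]
    rw [Equiv.swap_apply_of_ne_of_ne hia hib]
    by_contra hi
    rcases (hmoved i hi).1 with e | e
    exacts [hia e, hib e]

lemma det_twoBlock (h : j + 1 < n) : (twoBlock n j p q r s).det = p * s - q * r := by
  set a : Fin n := ⟨j, by omega⟩
  set b : Fin n := ⟨j + 1, h⟩
  have hab : a ≠ b := by simp [a, b]
  have hdiag : ∏ i, twoBlock n j p q r s i i = p * s := by
    rw [Fintype.prod_eq_mul a b hab]
    · simp [twoBlock, a, b]
    · rintro ⟨i, hi⟩ ⟨hia, hib⟩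
      simp only [a, b, ne_eq, Fin.mk.injEq] at hia hib
      simp [twoBlock, hia, hib]
  have hswap : ∏ i, twoBlock n j p q r s (Equiv.swap a b i) i = r * q := by
    rw [Fintype.prod_eq_mul a b hab]
    · simp [twoBlock, a, b]
    · rintro i ⟨hia, hib⟩
      rw [Equiv.swap_apply_of_ne_of_ne hia hib]
      simp only [a, b, ne_eq, Fin.ext_iff] at hia hib
      simp [twoBlock, hia, hib]
  rw [det_apply,
    Fintype.sum_eq_add 1 (Equiv.swap a b) (Ne.symm (Equiv.swap_eq_one_iff.not.mpr hab))]
  · rw [Equiv.Perm.sign_one, Equiv.Perm.sign_swap hab]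
    simp only [Equiv.Perm.one_apply, hdiag, hswap, one_smul, Units.neg_smul]
    ring
  · rintro σ ⟨hσ1, hσs⟩
    by_contra hσ
    rcases perm_eq_one_or_swap_of_prod_twoBlock_ne_zero h (right_ne_zero_of_smul hσ) with e | e
    exacts [hσ1 e, hσs e]

end TwoBlock

lemma det_burau {n j : ℕ} (h : j + 1 < n) : (burau n j).det = -T 1 := by
  rw [burau_eq_twoBlock, det_twoBlock h]
  ring

lemma det_burauInv {n j : ℕ} (h : j + 1 < n) : (burauInv n j).det = -T (-1) := by
  rw [burauInv_eq_twoBlock, det_twoBlock h]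
  ring

lemma det_burauWord {n : ℕ} {w : List (ℕ × Bool)} (hw : ∀ x ∈ w, x.1 + 1 < n) :
    (burauWord n w).det = (-T 1) ^ (w.filter fun x => x.2).length
      * (-T (-1)) ^ (w.filter fun x => !x.2).length := by
  have hdet : w.map (fun x => if x.2 then (burau n x.1).det else (burauInv n x.1).det)
      = w.map fun x => if x.2 then -T 1 else -T (-1) :=
    List.map_congr_left fun x hx => by
      split
      · exact det_burau (hw x hx)
      · exact det_burauInv (hw x hx)
  rw [burauWord, ← coe_detMonoidHom, map_list_prod, List.map_map, coe_detMonoidHom]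
  simp only [Function.comp_def, apply_ite det]
  rw [hdet, List.prod_map_ite]
  simp

lemma isUnit_det_burauWord {n : ℕ} {w : List (ℕ × Bool)} (hw : ∀ x ∈ w, x.1 + 1 < n) :
    IsUnit (burauWord n w).det := by
  rw [det_burauWord hw]
  exact ((isUnit_T (R := ℤ) 1).neg.pow _).mul ((isUnit_T (R := ℤ) (-1)).neg.pow _)

lemma T_one_mul_T_neg_one : (T 1 : LaurentPolynomial ℤ) * T (-1) = 1 := by
  rw [← T_add, add_neg_cancel, T_zero]

lemma neg_T_neg_one_pow_mul_neg_T_one_pow (k : ℕ) :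
    (-T (-1)) ^ k * (-T 1) ^ k = (1 : LaurentPolynomial ℤ) := by
  rw [← mul_pow, neg_mul_neg, mul_comm, T_one_mul_T_neg_one, one_pow]

lemma T_one_sub_natCast {n : ℕ} (hn : 0 < n) :
    T (1 - n) = ((-1) ^ (n + 1) * (-T (-1)) ^ (n - 1) : LaurentPolynomial ℤ) := by
  rw [neg_pow (T (-1) : LaurentPolynomial ℤ), T_pow, ← mul_assoc, ← pow_add,
    show n + 1 + (n - 1) = 2 * n by omega, pow_mul, neg_one_sq, one_pow, one_mul]
  congr 1
  omega

noncomputable def burauForm (n : ℕ) : Matrix (Fin n) (Fin n) (LaurentPolynomial ℤ) :=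
  Matrix.of fun i k => if i = k then 1 else if k < i then 1 - T 1 else 0

/-- `β(σ)|_{t→1/t} = Ω β(σ⁻¹)ᵀ Ω⁻¹`, rewritten as unitarity so that it is closed under products. -/
def burauUnitary (n : ℕ) : Submonoid (Matrix (Fin n) (Fin n) (LaurentPolynomial ℤ)) where
  carrier := {A | A.map invert * burauForm n * Aᵀ = burauForm n}
  mul_mem' {A B} hA hB := by
    simp only [Set.mem_ofPred_eq] at hA hB ⊢
    calc (A * B).map invert * burauForm n * (A * B)ᵀ
        = A.map invert * (B.map invert * burauForm n * Bᵀ) * Aᵀ := by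
          simp only [Matrix.map_mul, transpose_mul, Matrix.mul_assoc]
      _ = burauForm n := by rw [hB, hA]
  one_mem' := by simp

lemma mem_burauUnitary {n : ℕ} {A : Matrix (Fin n) (Fin n) (LaurentPolynomial ℤ)} :
    A ∈ burauUnitary n ↔ A.map invert * burauForm n * Aᵀ = burauForm n :=
  Iff.rfl

lemma burau_mem_burauUnitary {n j : ℕ} (h : j + 1 < n) : burau n j ∈ burauUnitary n := by
  refine mem_burauUnitary.mpr <| Matrix.ext fun i k => ?_
  rw [burau_eq_twoBlock, mul_transpose_twoBlock_apply h, twoBlock_map]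
  simp only [twoBlock_mul_apply h, burauForm, of_apply, Fin.ext_iff, Fin.lt_def, map_sub, map_one,
    map_zero, invert_T]
  split_ifs <;> first | omega | grind [T_one_mul_T_neg_one]

lemma burauInv_mem_burauUnitary {n j : ℕ} (h : j + 1 < n) : burauInv n j ∈ burauUnitary n := by
  refine mem_burauUnitary.mpr <| Matrix.ext fun i k => ?_
  rw [burauInv_eq_twoBlock, mul_transpose_twoBlock_apply h, twoBlock_map]
  simp only [twoBlock_mul_apply h, burauForm, of_apply, Fin.ext_iff, Fin.lt_def, map_sub, map_one,
    map_zero, invert_T, neg_neg]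
  split_ifs <;> first | omega | grind [T_one_mul_T_neg_one]

lemma burauWord_mem_burauUnitary {n : ℕ} {w : List (ℕ × Bool)} (hw : ∀ x ∈ w, x.1 + 1 < n) :
    burauWord n w ∈ burauUnitary n :=
  Submonoid.list_prod_mem _ fun A hA => by
    obtain ⟨x, hx, rfl⟩ := List.mem_map.mp hA
    split
    · exact burau_mem_burauUnitary (hw x hx)
    · exact burauInv_mem_burauUnitary (hw x hx)

lemma charpoly_eq_charpoly_inv_of_mul_mul_transpose {ι R : Type*} [Fintype ι] [DecidableEq ι]
    [CommRing R] {A B Ω : Matrix ι ι R} (hΩ : IsUnit Ω.det) (hB : IsUnit B.det)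
    (h : A * Ω * Bᵀ = Ω) : A.charpoly = B⁻¹.charpoly := by
  have hBt : IsUnit Bᵀ.det := by rwa [det_transpose]
  have hA : A = Ω * Bᵀ⁻¹ * Ω⁻¹ :=
    calc A = A * Ω * Bᵀ * Bᵀ⁻¹ * Ω⁻¹ := by
          rw [mul_nonsing_inv_cancel_right _ _ hBt, mul_nonsing_inv_cancel_right _ _ hΩ]
      _ = Ω * Bᵀ⁻¹ * Ω⁻¹ := by rw [h]
  rw [hA, charpoly_mul_comm, ← Matrix.mul_assoc, nonsing_inv_mul _ hΩ, Matrix.one_mul,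
    ← transpose_nonsing_inv, charpoly_transpose]

lemma det_burauForm (n : ℕ) : (burauForm n).det = 1 := by
  have htri : (burauForm n).IsLowerTriangular := fun i k (hik : i < k) => by
    simp [burauForm, hik.ne, hik.not_gt]
  rw [det_of_isLowerTriangular _ htri]
  exact Finset.prod_eq_one fun i _ => by simp [burauForm]

lemma charpoly_map_invert_burauWord {n : ℕ} {w : List (ℕ × Bool)} (hw : ∀ x ∈ w, x.1 + 1 < n) :
    (burauWord n w).charpoly.map (invert (R := ℤ) : LaurentPolynomial ℤ →+* LaurentPolynomial ℤ)
      = (burauWord n w)⁻¹.charpoly := by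
  rw [← charpoly_map]
  exact charpoly_eq_charpoly_inv_of_mul_mul_transpose (by simp [det_burauForm])
    (isUnit_det_burauWord hw) (mem_burauUnitary.mp (burauWord_mem_burauUnitary hw))

lemma reverse_X_sub_one {R : Type*} [CommRing R] [Nontrivial R] :
    (X - 1 : R[X]).reverse = -(X - 1) := by
  have hX : (X : R[X]).reverse = 1 := by
    rw [← mul_one X, reverse_X_mul, ← Polynomial.C_1, reverse_C]
  rw [sub_eq_add_neg, ← Polynomial.C_1, ← Polynomial.C_neg, reverse_add_C, hX, natDegree_X]
  simp

lemma eval_one_reverse {R : Type*} [CommRing R] (g : R[X]) : g.reverse.eval 1 = g.eval 1 := by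
  let := invertibleOne (α := R)
  simpa using eval₂_reverse_mul_pow (RingHom.id R) 1 g

lemma map_eval_one_of_map_eq_C_mul_reverse {R : Type*} [CommRing R] [IsDomain R] (f : R →+* R)
    {g : R[X]} {c : R} (h : ((X - 1) * g).map f = Polynomial.C c * ((X - 1) * g).reverse) :
    f (g.eval 1) = -c * g.eval 1 := by
  have hg : g.map f = -Polynomial.C c * g.reverse := by
    rw [Polynomial.map_mul, Polynomial.map_sub, Polynomial.map_X, Polynomial.map_one,
      reverse_mul_of_domain, reverse_X_sub_one] at h
    refine mul_left_cancel₀ (X_sub_C_ne_zero (1 : R)) ?_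
    rw [Polynomial.C_1]
    linear_combination h
  simpa [eval_one_reverse] using congrArg (eval 1) hg

lemma sum_T_range_ne_zero {n : ℕ} (hn : 0 < n) :
    (∑ i ∈ Finset.range n, T (i : ℤ) : LaurentPolynomial ℤ) ≠ 0 := fun h0 => by
  have := congrArg (LaurentPolynomial.eval₂ (RingHom.id ℤ) 1) h0
  simp at this
  omega

lemma invert_sum_T_range (n : ℕ) :
    invert (∑ i ∈ Finset.range n, T (i : ℤ) : LaurentPolynomial ℤ)
      = T (1 - n) * ∑ i ∈ Finset.range n, T (i : ℤ) := by
  rw [map_sum, Finset.mul_sum, ← Finset.sum_range_reflect]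
  refine Finset.sum_congr rfl fun i hi => ?_
  rw [invert_T, ← T_add]
  congr 1
  have := Finset.mem_range.mp hi
  omega

lemma invert_eval_one_mul_det_burauWord {n : ℕ} {w : List (ℕ × Bool)}
    (hw : ∀ x ∈ w, x.1 + 1 < n) {g : Polynomial (LaurentPolynomial ℤ)}
    (hg : (burauWord n w).charpoly = (X - 1) * g) :
    invert (g.eval 1) * (burauWord n w).det = (-1) ^ (n + 1) * g.eval 1 := by
  set M := burauWord n w
  have hM : IsUnit M := (isUnit_iff_isUnit_det M).mpr (isUnit_det_burauWord hw)
  have hsym : ((X - 1) * g).map (invert (R := ℤ) : LaurentPolynomial ℤ →+* LaurentPolynomial ℤ)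
      = Polynomial.C ((-1) ^ n * Ring.inverse M.det) * ((X - 1) * g).reverse := by
    rw [← hg, charpoly_map_invert_burauWord hw, charpoly_inv M hM, reverse_charpoly,
      Fintype.card_fin, map_mul, map_pow, map_neg, map_one]
  have key := map_eval_one_of_map_eq_C_mul_reverse _ hsym
  rw [RingHom.coe_coe] at key
  linear_combination M.det * key
    - ((-1) ^ n * g.eval 1) * Ring.inverse_mul_cancel _ ((isUnit_iff_isUnit_det M).mp hM)

/-- The limit `s → 1` is taken by dividing the characteristic polynomial by `s - 1` and evaluating
at `1`; the symmetry is multiplied out by `(-t)^a`, where `a` and `b` count positive and negative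
letters of `w`. -/
theorem stmt6 (n : ℕ) (hn : 0 < n) (w : List (ℕ × Bool))
    (hw : ∀ x ∈ w, x.1 + 1 < n)
    (g : Polynomial (LaurentPolynomial ℤ)) (Δ : LaurentPolynomial ℤ)
    (hg : (burauWord n w).charpoly = (X - 1) * g)
    (hΔ : Δ * (∑ i ∈ Finset.range n, T (i : ℤ)) = g.eval 1) :
    LaurentPolynomial.invert Δ * (-(T 1)) ^ (w.filter fun x => x.2).length
      = (-(T 1)) ^ ((w.filter fun x => !x.2).length + (n - 1)) * Δ := by
  have key := invert_eval_one_mul_det_burauWord hw hg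
  rw [← hΔ, map_mul, invert_sum_T_range, det_burauWord hw, T_one_sub_natCast hn] at key
  set a := (w.filter fun x => x.2).length
  set b := (w.filter fun x => !x.2).length
  have hsymm : invert Δ * (-T 1) ^ a * (-T (-1)) ^ (b + (n - 1)) = Δ := by
    refine mul_left_cancel₀ (pow_ne_zero (n + 1) (neg_ne_zero.mpr one_ne_zero)) ?_
    refine mul_right_cancel₀ (sum_T_range_ne_zero hn) ?_
    linear_combination key
  calc invert Δ * (-T 1) ^ a
      = invert Δ * (-T 1) ^ a * ((-T (-1)) ^ (b + (n - 1)) * (-T 1) ^ (b + (n - 1))) := by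
        rw [neg_T_neg_one_pow_mul_neg_T_one_pow, mul_one]
    _ = (-T 1) ^ (b + (n - 1)) * Δ := by rw [← mul_assoc, hsymm, mul_comm]
end

section
/- Identity of Christoffel-type words under substitution: for coprime positive integers p < q, substituting A ↦ L and B ↦ LR into the lower Christoffel word ch_{p/q}(A,B) yields the lower Christoffel word ch_{p/(p+q)}(L,R). Equivalently, for 1 ≤ j ≤ p, the position of the j-th occurrence of R in ch_{p/(p+q)}(L,R) is j + ⌈qj/p⌉, which agrees with its position in ch_{p/q}(L,LR). -/
/-!
Let `a j = ⌈q j / p⌉`. Since `p ≤ q`, the sequence `a` starts at `a 0 = 0`, ends at `a p = q`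
and increases strictly, so `ch_{p/q}` is the concatenation of the blocks `A^(a (j+1) - a j - 1) B`,
`j < p`. The substitution turns each block into `L^(a (j+1) - a j) R`. On the other side
`⌈(p + q) j / p⌉ = j + a j`, so the blocks of `ch_{p/(p+q)}` are exactly these.
-/

open Classical in
/-- The lower Christoffel word `ch_{p/q}(A, B)` as a list of booleans (`false = A`,
`true = B`): it has length `q`, and for `1 ≤ j ≤ p` the `j`-th occurrence of `B` is at
position `⌈q j / p⌉ = (q j + p - 1) / p` (1-indexed); all other letters are `A`. -/
noncomputable def chWord (p q : ℕ) : List Bool :=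
  (List.range q).map fun i =>
    if ∃ j, 1 ≤ j ∧ j ≤ p ∧ i + 1 = (q * j + p - 1) / p then true else false

/-- Substitution `A ↦ L`, `B ↦ LR` on words over `{A, B}` (`false = A = L`, `true = B`,
`R = true` in the output alphabet `{L, R}` with `L = false`). -/
noncomputable def substLR (w : List Bool) : List Bool :=
  w.flatMap fun b => if b then [false, true] else [false]

open Classical in
noncomputable def markedWord (A : ℕ → ℕ) (p n : ℕ) : List Bool :=
  (List.range n).map fun i =>
    if ∃ j, 1 ≤ j ∧ j ≤ p ∧ i + 1 = A j then true else false

section MarkedWord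

variable {A : ℕ → ℕ}

lemma range_map_eq_replicate_append (d : ℕ) :
    (List.range (d + 1)).map (fun t => if t = d then true else false) =
      List.replicate d false ++ [true] := by
  rw [List.range_succ, List.map_append, List.map_singleton, if_pos rfl,
    List.map_congr_left fun t ht => if_neg (List.mem_range.mp ht).ne, List.map_const',
    List.length_range]

open Classical in
lemma markedWord_succ (hA : StrictMono A) (p : ℕ) :
    markedWord A (p + 1) (A (p + 1)) =
      markedWord A p (A p) ++ (List.replicate (A (p + 1) - A p - 1) false ++ [true]) := by
  obtain ⟨d, hd⟩ : ∃ d, A (p + 1) = A p + (d + 1) :=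
    ⟨A (p + 1) - A p - 1, by have := hA (Nat.lt_add_one p); omega⟩
  rw [markedWord, hd, List.range_add, List.map_append, List.map_map,
    Nat.add_sub_cancel_left, Nat.add_sub_cancel, ← range_map_eq_replicate_append d]
  congr 1
  · refine List.map_congr_left fun i hi => if_congr ?_ rfl rfl
    have hi : i < A p := List.mem_range.mp hi
    refine ⟨fun ⟨j, h1, h2, h3⟩ => ⟨j, h1, ?_, h3⟩, fun ⟨j, h1, h2, h3⟩ => ⟨j, h1, by omega, h3⟩⟩
    by_contra! hj
    obtain rfl : j = p + 1 := by omega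
    omega
  · refine List.map_congr_left fun t ht => if_congr ?_ rfl rfl
    have ht : t < d + 1 := List.mem_range.mp ht
    dsimp only
    constructor
    · rintro ⟨j, h1, h2, h3⟩
      rcases h2.eq_or_lt with rfl | hj
      · omega
      · have := hA.monotone (Nat.le_of_lt_succ hj)
        omega
    · exact fun h => ⟨p + 1, by omega, le_rfl, by omega⟩

lemma markedWord_eq_flatMap (hA : StrictMono A) (hA0 : A 0 = 0) (p : ℕ) :
    markedWord A p (A p) =
      (List.range p).flatMap fun j => List.replicate (A (j + 1) - A j - 1) false ++ [true] := by
  induction p with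
  | zero => simp [markedWord, hA0]
  | succ p ih => rw [markedWord_succ hA, ih, List.range_succ, List.flatMap_append,
      List.flatMap_singleton]

end MarkedWord

lemma substLR_flatMap {α : Type*} (l : List α) (g : α → List Bool) :
    substLR (l.flatMap g) = l.flatMap fun x => substLR (g x) := by
  simp only [substLR, List.flatMap_assoc]

lemma substLR_replicate_append (k : ℕ) :
    substLR (List.replicate k false ++ [true]) = List.replicate (k + 1) false ++ [true] := by
  induction k with
  | zero => rfl
  | succ k ih => simpa [substLR, List.replicate_succ] using ih

def chPos (p q j : ℕ) : ℕ := (q * j + p - 1) / p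

section ChPos

variable {p : ℕ}

lemma chPos_zero (hp : 0 < p) (q : ℕ) : chPos p q 0 = 0 :=
  Nat.div_eq_of_lt (by omega)

lemma chPos_self (hp : 0 < p) (q : ℕ) : chPos p q p = q := by
  rw [chPos, show q * p + p - 1 = p * q + (p - 1) by rw [mul_comm]; omega,
    Nat.mul_add_div hp, Nat.div_eq_of_lt (by omega), add_zero]

lemma chPos_add_left (hp : 0 < p) (q j : ℕ) : chPos p (p + q) j = j + chPos p q j := by
  rw [chPos, chPos, show (p + q) * j + p - 1 = q * j + p - 1 + p * j by rw [add_mul]; omega,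
    Nat.add_mul_div_left _ _ hp, add_comm]

lemma chPos_strictMono (hp : 0 < p) {q : ℕ} (hpq : p ≤ q) : StrictMono (chPos p q) := by
  refine strictMono_nat_of_lt_succ fun j => Nat.lt_of_succ_le ?_
  calc chPos p q j + 1 = (q * j + p - 1 + p) / p := (Nat.add_div_right _ hp).symm
    _ ≤ chPos p q (j + 1) := Nat.div_le_div_right (by rw [mul_add_one]; omega)

lemma chWord_eq_markedWord (q : ℕ) : chWord p q = markedWord (chPos p q) p q := rfl

lemma chWord_eq_flatMap (hp : 0 < p) {q : ℕ} (hpq : p ≤ q) :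
    chWord p q = (List.range p).flatMap fun j =>
      List.replicate (chPos p q (j + 1) - chPos p q j - 1) false ++ [true] := by
  have h := markedWord_eq_flatMap (chPos_strictMono hp hpq) (chPos_zero hp q) p
  rw [chPos_self hp] at h
  rw [chWord_eq_markedWord, h]

end ChPos

theorem stmt9_general (p q : ℕ) (h0 : 0 < p) (hpq : p < q) :
    substLR (chWord p q) = chWord p (p + q) ∧
    ∀ j, 1 ≤ j → j ≤ p →
      ((p + q) * j + p - 1) / p = j + (q * j + p - 1) / p := by
  refine ⟨?_, fun j _ _ => chPos_add_left h0 q j⟩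
  rw [chWord_eq_flatMap h0 hpq.le, chWord_eq_flatMap h0 (Nat.le_add_right p q), substLR_flatMap]
  refine List.flatMap_congr fun j _ => ?_
  have := chPos_strictMono h0 hpq.le (Nat.lt_add_one j)
  rw [substLR_replicate_append, chPos_add_left h0, chPos_add_left h0]
  congr 2
  omega

/-- For coprime positive integers `p < q`, substituting `A ↦ L`, `B ↦ LR` into the lower
Christoffel word `ch_{p/q}(A,B)` yields the lower Christoffel word `ch_{p/(p+q)}(L,R)`;
equivalently, for `1 ≤ j ≤ p` the position of the `j`-th `R` in `ch_{p/(p+q)}(L,R)`,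
namely `⌈(p+q) j / p⌉`, equals `j + ⌈q j / p⌉`, its position in `ch_{p/q}(L, LR)`. -/
theorem stmt9 (p q : ℕ) (h0 : 0 < p) (hpq : p < q) (hco : Nat.Coprime p q) :
    substLR (chWord p q) = chWord p (p + q) ∧
    ∀ j, 1 ≤ j → j ≤ p →
      ((p + q) * j + p - 1) / p = j + (q * j + p - 1) / p :=
  stmt9_general p q h0 hpq
end

section
/- The number of tuples (p_1, q_1, …, p_r, q_r) of positive integers with r ≥ 1, p_1 > 1, q_r > 1, satisfying Σ_{j=1}^{r−1} (P_j − 1) q_j + (P_r − 1)(q_r − 1) = n (where P_j = p_1 + ⋯ + p_j), equals the number of partitions p(n) of n. -/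
/-!
Put `m_j = P_j - 1` and `d_j = q_j` for `j < r`, `d_r = q_r - 1`. Then the defining sum is
`m_1 d_1 + ⋯ + m_r d_r`, and the conditions `p_1 ≥ 2`, `p_j ≥ 1`, `q_r ≥ 2` say exactly that
`0 < m_1 < ⋯ < m_r` and all `d_j ≥ 1`. The map is inverted by `p_1 = m_1 + 1`,
`p_j = m_j - m_{j-1}`, `q_j = d_j` for `j < r` and `q_r = d_r + 1`, so the tuples are in bijection
with the lists of distinct part sizes and their multiplicities, i.e. with the partitions of `n`.
-/

/-- Given an accumulator `acc` (the sum of the earlier `p_j`'s) and the remaining list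
`[(p_i, q_i), …, (p_r, q_r)]`, computes `Σ_{j=i}^{r-1} (P_j - 1) q_j + (P_r - 1)(q_r - 1)`
where `P_j = acc + p_i + ⋯ + p_j`. -/
def lorenzDegree : ℕ → List (ℕ × ℕ) → ℕ
  | _, [] => 0
  | acc, [pq] => (acc + pq.1 - 1) * (pq.2 - 1)
  | acc, pq :: rest => (acc + pq.1 - 1) * pq.2 + lorenzDegree (acc + pq.1) rest

/-- The set of tuples `(p_1, q_1, …, p_r, q_r)` of positive integers with `r ≥ 1`,
`p_1 > 1`, `q_r > 1`, and `Σ_{j=1}^{r-1} (P_j - 1) q_j + (P_r - 1)(q_r - 1) = n`,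
where `P_j = p_1 + ⋯ + p_j`. -/
def lorenzTuples (n : ℕ) : Set (List (ℕ × ℕ)) :=
  {l | l ≠ [] ∧ (∀ x ∈ l, 1 ≤ x.1 ∧ 1 ≤ x.2) ∧ 1 < l.headI.1 ∧ 1 < l.getLast!.2 ∧
    lorenzDegree 0 l = n}

namespace Lorenz

theorem getLast!_mem {α : Type*} [Inhabited α] {l : List α} (hl : l ≠ []) : l.getLast! ∈ l := by
  rw [List.getLast!_of_getLast? (List.getLast?_eq_some_getLast hl)]
  exact List.getLast_mem hl

def toSizeMults : ℕ → List (ℕ × ℕ) → List (ℕ × ℕ)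
  | _, [] => []
  | acc, [pq] => [(acc + pq.1 - 1, pq.2 - 1)]
  | acc, pq :: r :: rest => (acc + pq.1 - 1, pq.2) :: toSizeMults (acc + pq.1) (r :: rest)

-- As in `lorenzDegree`, `acc` stands for `P_{j-1}`, which is `m_{j-1} + 1` on this side.
def ofSizeMults : ℕ → List (ℕ × ℕ) → List (ℕ × ℕ)
  | _, [] => []
  | acc, [md] => [(md.1 + 1 - acc, md.2 + 1)]
  | acc, md :: r :: rest => (md.1 + 1 - acc, md.2) :: ofSizeMults (md.1 + 1) (r :: rest)

@[simp] theorem toSizeMults_eq_nil {acc : ℕ} {l : List (ℕ × ℕ)} :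
    toSizeMults acc l = [] ↔ l = [] := by
  match l with
  | [] | [_] | _ :: _ :: _ => simp [toSizeMults]

@[simp] theorem ofSizeMults_eq_nil {acc : ℕ} {l : List (ℕ × ℕ)} :
    ofSizeMults acc l = [] ↔ l = [] := by
  match l with
  | [] | [_] | _ :: _ :: _ => simp [ofSizeMults]

theorem toSizeMults_cons {acc : ℕ} (pq : ℕ × ℕ) {l : List (ℕ × ℕ)} (hl : l ≠ []) :
    toSizeMults acc (pq :: l) = (acc + pq.1 - 1, pq.2) :: toSizeMults (acc + pq.1) l := by
  obtain ⟨r, rest, rfl⟩ := List.exists_cons_of_ne_nil hl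
  rfl

theorem ofSizeMults_cons {acc : ℕ} (md : ℕ × ℕ) {l : List (ℕ × ℕ)} (hl : l ≠ []) :
    ofSizeMults acc (md :: l) = (md.1 + 1 - acc, md.2) :: ofSizeMults (md.1 + 1) l := by
  obtain ⟨r, rest, rfl⟩ := List.exists_cons_of_ne_nil hl
  rfl

def partsOf (l : List (ℕ × ℕ)) : Multiset ℕ :=
  (l.map fun x => Multiset.replicate x.2 x.1).sum

@[simp] theorem partsOf_nil : partsOf [] = 0 := rfl

@[simp] theorem partsOf_cons (x : ℕ × ℕ) (l : List (ℕ × ℕ)) :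
    partsOf (x :: l) = Multiset.replicate x.2 x.1 + partsOf l := rfl

def IsSizeMults (l : List (ℕ × ℕ)) : Prop :=
  l.Pairwise (fun a b => a.1 < b.1) ∧ ∀ x ∈ l, 0 < x.1 ∧ 0 < x.2

theorem lorenzDegree_eq_sum_partsOf_toSizeMults :
    ∀ (acc : ℕ) (l : List (ℕ × ℕ)), lorenzDegree acc l = (partsOf (toSizeMults acc l)).sum
  | _, [] => rfl
  | acc, [pq] => by simp [lorenzDegree, toSizeMults, mul_comm]
  | acc, pq :: r :: rest => by
    simp [lorenzDegree, toSizeMults, lorenzDegree_eq_sum_partsOf_toSizeMults (acc + pq.1), mul_comm]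

theorem le_fst_add_one_of_mem_toSizeMults :
    ∀ (acc : ℕ) (l : List (ℕ × ℕ)), ∀ y ∈ toSizeMults acc l, acc + l.headI.1 ≤ y.1 + 1
  | _, [] => by simp [toSizeMults]
  | acc, [pq] => by simp [toSizeMults]; omega
  | acc, pq :: r :: rest => by
    simp only [toSizeMults, List.mem_cons, List.headI_cons, forall_eq_or_imp]
    refine ⟨by omega, fun y hy => ?_⟩
    have := le_fst_add_one_of_mem_toSizeMults (acc + pq.1) (r :: rest) y hy
    simp only [List.headI_cons] at this
    omega

theorem pairwise_toSizeMults :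
    ∀ (acc : ℕ) (l : List (ℕ × ℕ)), (∀ x ∈ l, 0 < x.1) →
      (toSizeMults acc l).Pairwise (fun a b => a.1 < b.1)
  | _, [], _ => by simp [toSizeMults]
  | acc, [pq], _ => by simp [toSizeMults]
  | acc, pq :: r :: rest, hl => by
    have hpq : 0 < pq.1 := hl pq (by simp)
    have hr : 0 < r.1 := hl r (by simp)
    rw [toSizeMults, List.pairwise_cons]
    refine ⟨fun y hy => ?_, pairwise_toSizeMults _ _ fun x hx => hl x (.tail _ hx)⟩
    have := le_fst_add_one_of_mem_toSizeMults (acc + pq.1) (r :: rest) y hy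
    simp only [List.headI_cons] at this
    omega

theorem pos_snd_of_mem_toSizeMults :
    ∀ (acc : ℕ) (l : List (ℕ × ℕ)), (∀ x ∈ l, 0 < x.2) → 1 < l.getLast!.2 →
      ∀ y ∈ toSizeMults acc l, 0 < y.2
  | _, [], _, _ => by simp [toSizeMults]
  | acc, [pq], _, hlast => by simp [toSizeMults] at hlast ⊢; omega
  | acc, pq :: r :: rest, hl, hlast => by
    simp only [toSizeMults, List.mem_cons, forall_eq_or_imp]
    exact ⟨hl pq (by simp), pos_snd_of_mem_toSizeMults _ _ (fun x hx => hl x (.tail _ hx))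
      (by simpa using hlast)⟩

theorem ofSizeMults_toSizeMults :
    ∀ (acc : ℕ) (l : List (ℕ × ℕ)), (∀ x ∈ l, 0 < x.1 ∧ 0 < x.2) →
      ofSizeMults acc (toSizeMults acc l) = l
  | _, [], _ => rfl
  | acc, [pq], hl => by
    have := hl pq (by simp)
    simp only [toSizeMults, ofSizeMults, List.cons.injEq, and_true]
    ext <;> simp <;> omega
  | acc, pq :: r :: rest, hl => by
    have := hl pq (by simp)
    rw [toSizeMults, ofSizeMults_cons _ (by simp),
      show acc + pq.1 - 1 + 1 = acc + pq.1 by omega,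
      ofSizeMults_toSizeMults _ _ fun x hx => hl x (.tail _ hx)]
    simp

theorem toSizeMults_ofSizeMults :
    ∀ (acc : ℕ) (l : List (ℕ × ℕ)), (∀ y ∈ l, acc ≤ y.1) →
      l.Pairwise (fun a b => a.1 < b.1) → toSizeMults acc (ofSizeMults acc l) = l
  | _, [], _, _ => rfl
  | acc, [md], hl, _ => by
    have := hl md (by simp)
    simp only [ofSizeMults, toSizeMults, List.cons.injEq, and_true]
    ext <;> simp; omega
  | acc, md :: r :: rest, hl, hsorted => by
    have := hl md (by simp)
    rw [List.pairwise_cons] at hsorted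
    rw [ofSizeMults, toSizeMults_cons _ (by simp), show acc + (md.1 + 1 - acc) = md.1 + 1 by omega,
      toSizeMults_ofSizeMults _ _ (fun y hy => hsorted.1 y hy) hsorted.2]
    simp

theorem pos_of_mem_ofSizeMults :
    ∀ (acc : ℕ) (l : List (ℕ × ℕ)), (∀ y ∈ l, acc ≤ y.1) → (∀ y ∈ l, 0 < y.2) →
      l.Pairwise (fun a b => a.1 < b.1) → ∀ x ∈ ofSizeMults acc l, 0 < x.1 ∧ 0 < x.2
  | _, [], _, _, _ => by simp [ofSizeMults]
  | acc, [md], hl, _, _ => by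
    have := hl md (by simp)
    simp [ofSizeMults]
    omega
  | acc, md :: r :: rest, hl, hpos, hsorted => by
    have := hl md (by simp)
    rw [List.pairwise_cons] at hsorted
    simp only [ofSizeMults, List.mem_cons, forall_eq_or_imp]
    exact ⟨⟨by omega, hpos md (by simp)⟩, pos_of_mem_ofSizeMults _ _ (fun y hy => hsorted.1 y hy)
      (fun y hy => hpos y (.tail _ hy)) hsorted.2⟩

theorem headI_ofSizeMults {acc : ℕ} {l : List (ℕ × ℕ)} (hl : l ≠ []) :
    (ofSizeMults acc l).headI.1 = l.headI.1 + 1 - acc := by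
  match l with
  | [_] | _ :: _ :: _ => simp [ofSizeMults]

theorem getLast!_ofSizeMults :
    ∀ (acc : ℕ) (l : List (ℕ × ℕ)), l ≠ [] → (ofSizeMults acc l).getLast!.2 = l.getLast!.2 + 1
  | acc, [md], _ => by simp [ofSizeMults]
  | acc, md :: r :: rest, _ => by
    have ih := getLast!_ofSizeMults (md.1 + 1) (r :: rest) (by simp)
    obtain ⟨z, t, hzt⟩ : ∃ z t, ofSizeMults (md.1 + 1) (r :: rest) = z :: t :=
      List.exists_cons_of_ne_nil (by simp)
    rw [hzt] at ih
    rw [ofSizeMults_cons _ (by simp), hzt]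
    simpa using ih

def lorenzTuplesEquiv {n : ℕ} (hn : 0 < n) :
    lorenzTuples n ≃ {l // IsSizeMults l ∧ (partsOf l).sum = n} where
  toFun l := ⟨toSizeMults 0 l, by
    obtain ⟨-, hpos, hhead, hlast, hdeg⟩ := l.2
    refine ⟨⟨pairwise_toSizeMults 0 l fun x hx => (hpos x hx).1, fun y hy => ⟨?_,
      pos_snd_of_mem_toSizeMults 0 l (fun x hx => (hpos x hx).2) hlast y hy⟩⟩, ?_⟩
    · have := le_fst_add_one_of_mem_toSizeMults 0 l y hy
      omega
    · rw [← lorenzDegree_eq_sum_partsOf_toSizeMults, hdeg]⟩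
  invFun l := ⟨ofSizeMults 0 l, by
    obtain ⟨⟨hsorted, hpos⟩, hsum⟩ := l.2
    have hne : l.1 ≠ [] := by
      rintro h
      simp [h] at hsum
      omega
    refine ⟨ofSizeMults_eq_nil.not.2 hne,
      pos_of_mem_ofSizeMults 0 l (by simp) (fun y hy => (hpos y hy).2) hsorted, ?_, ?_, ?_⟩
    · obtain ⟨x, t, hxt⟩ := List.exists_cons_of_ne_nil hne
      have := (hpos x (by simp [hxt])).1
      rw [headI_ofSizeMults hne, hxt]
      simpa
    · rw [getLast!_ofSizeMults 0 l hne]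
      have := (hpos _ (getLast!_mem hne)).2
      omega
    · rw [lorenzDegree_eq_sum_partsOf_toSizeMults, toSizeMults_ofSizeMults 0 l (by simp) hsorted,
        hsum]⟩
  left_inv l := Subtype.ext (ofSizeMults_toSizeMults 0 l l.2.2.1)
  right_inv l := Subtype.ext (toSizeMults_ofSizeMults 0 l (by simp) l.2.1.1)

theorem mem_partsOf {a : ℕ} {l : List (ℕ × ℕ)} : a ∈ partsOf l ↔ ∃ x ∈ l, x.1 = a ∧ 0 < x.2 := by
  induction l with
  | nil => simp
  | cons y t ih => simp [ih, Multiset.mem_replicate, eq_comm, Nat.pos_iff_ne_zero, and_comm]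

theorem count_partsOf {l : List (ℕ × ℕ)} (hl : l.Pairwise (fun a b => a.1 < b.1)) {x : ℕ × ℕ}
    (hx : x ∈ l) : (partsOf l).count x.1 = x.2 := by
  induction l with
  | nil => simp at hx
  | cons y t ih =>
    rw [List.pairwise_cons] at hl
    rw [partsOf_cons, Multiset.count_add, Multiset.count_replicate]
    rcases List.mem_cons.1 hx with rfl | hx
    · have : x.1 ∉ partsOf t := fun h => by
        obtain ⟨z, hz, hzx, -⟩ := mem_partsOf.1 h
        have := hl.1 z hz
        omega
      simp [Multiset.count_eq_zero.2 this]
    · have := hl.1 x hx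
      rw [if_neg this.ne, ih hl.2 hx, zero_add]

def sizeMultsOf (s : Multiset ℕ) : List (ℕ × ℕ) :=
  s.toFinset.sort.map fun m => (m, s.count m)

theorem partsOf_sizeMultsOf (s : Multiset ℕ) : partsOf (sizeMultsOf s) = s := by
  simp only [partsOf, sizeMultsOf, List.map_map, Function.comp_def]
  rw [← Multiset.sum_coe, ← Multiset.map_coe, Finset.sort_eq]
  simp only [← Multiset.nsmul_singleton]
  exact Multiset.toFinset_sum_count_nsmul_eq s

theorem sizeMultsOf_partsOf {l : List (ℕ × ℕ)} (hl : IsSizeMults l) :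
    sizeMultsOf (partsOf l) = l := by
  have hsizes : (l.map Prod.fst).Pairwise (· < ·) := List.pairwise_map.2 hl.1
  have hfin : (partsOf l).toFinset = (l.map Prod.fst).toFinset := by
    ext a
    simp only [Multiset.mem_toFinset, mem_partsOf, List.mem_toFinset, List.mem_map]
    exact ⟨fun ⟨x, hx, hxa, _⟩ => ⟨x, hx, hxa⟩, fun ⟨x, hx, hxa⟩ => ⟨x, hx, hxa, (hl.2 x hx).2⟩⟩
  rw [sizeMultsOf, hfin, (List.toFinset_sort _ (hsizes.imp ne_of_lt)).2 (hsizes.imp le_of_lt),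
    List.map_map]
  conv_rhs => rw [← List.map_id l]
  exact List.map_congr_left fun x hx => by simp [count_partsOf hl.1 hx]

theorem isSizeMults_sizeMultsOf {s : Multiset ℕ} (hs : ∀ i ∈ s, 0 < i) :
    IsSizeMults (sizeMultsOf s) := by
  refine ⟨List.pairwise_map.2 (Finset.sortedLT_sort _).pairwise, ?_⟩
  simp only [sizeMultsOf, List.mem_map, Finset.mem_sort, Multiset.mem_toFinset]
  rintro _ ⟨m, hm, rfl⟩
  exact ⟨hs m hm, Multiset.count_pos.2 hm⟩

def sizeMultsEquivPartition (n : ℕ) :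
    {l // IsSizeMults l ∧ (partsOf l).sum = n} ≃ Nat.Partition n where
  toFun l := ⟨partsOf l, fun hi => by
    obtain ⟨x, hx, rfl, -⟩ := mem_partsOf.1 hi
    exact (l.2.1.2 x hx).1, l.2.2⟩
  invFun p := ⟨sizeMultsOf p.parts, isSizeMults_sizeMultsOf fun _ => p.parts_pos, by
    rw [partsOf_sizeMultsOf, p.parts_sum]⟩
  left_inv l := Subtype.ext (sizeMultsOf_partsOf l.2.1)
  right_inv p := Nat.Partition.ext (partsOf_sizeMultsOf p.parts)

end Lorenz

/-- The number of tuples `(p_1, q_1, …, p_r, q_r)` of positive integers with `r ≥ 1`,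
`p_1 > 1`, `q_r > 1` and `Σ_{j=1}^{r-1} (P_j - 1) q_j + (P_r - 1)(q_r - 1) = n` equals the
number of partitions `p(n)` of `n`. -/
theorem stmt11 (n : ℕ) (hn : 0 < n) :
    (lorenzTuples n).ncard = Fintype.card (Nat.Partition n) := by
  rw [← Nat.card_coe_set_eq, ← Nat.card_eq_fintype_card,
    Nat.card_congr ((Lorenz.lorenzTuplesEquiv hn).trans (Lorenz.sizeMultsEquivPartition n))]
end

section
/- For the word-to-matrix construction realizing surjectivity onto continued fraction classes: given positive integers c_1, …, c_{2ℓ}, let γ = T^{c_1} V^{c_2} ⋯ T^{c_{2ℓ−1}} V^{c_{2ℓ}} = [[a, b],[c, d]] where T = [[1,1],[0,1]] and V = [[1,0],[1,1]]. Then c > 0, and the quadratic form Q(x,y) = c x² + (d − a) x y − b y² has positive non-square discriminant whose root w_Q = ((a − d) + √((a+d)² − 4))/(2c) is the fixed point of γ greater than 1 with purely periodic continued fraction expansion [overline{c_1, c_2, …, c_{2ℓ}}]. -/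
/-- The matrix `T = [[1,1],[0,1]] ∈ SL₂(ℤ)`. -/
def Tm : Matrix (Fin 2) (Fin 2) ℤ := !![1, 1; 0, 1]

/-- The matrix `V = [[1,0],[1,1]] ∈ SL₂(ℤ)`. -/
def Vm : Matrix (Fin 2) (Fin 2) ℤ := !![1, 0; 1, 1]

/-- Value of the finite continued fraction `c_1 + 1/(c_2 + 1/(⋯ + 1/(c_m + 1/x)))`. -/
noncomputable def cfVal : List ℕ → ℝ → ℝ
  | [], x => x
  | a :: l, x => a + (cfVal l x)⁻¹

/-! With `M a = [[a, 1], [1, 0]]` one has `T^k V^m = M k * M m`, so `γ = M c₁ ⋯ M c₂ₗ`; since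
`M a` acts on `x > 0` by `x ↦ a + 1/x`, the Möbius action of `γ` on `x > 0` is the finite
continued fraction `cfVal [c₁, …, c₂ₗ] x`. The continued fraction identity therefore reduces to
`w` being a fixed point of `γ`, i.e. (as `det γ = 1`) a root of `c x² + (d - a) x - b`, whose
discriminant is `(a + d)² - 4`.

The inequalities come from the condition `0 < c`, `0 < d`, `c < a`, `d ≤ b`, which every block
`T^k V^m` with `k, m ≥ 1` satisfies and which is stable under products. It gives `a + d ≥ 3`, so
`(a + d)² - 4` lies strictly between two consecutive squares, and `a + b > c + d`, which is
exactly what places the larger root above `1`. -/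

theorem List.prod_map_range_two_mul {M : Type*} [Monoid M] (f : ℕ → M) (n : ℕ) :
    ((List.range (2 * n)).map f).prod =
      ((List.range n).map fun i => f (2 * i) * f (2 * i + 1)).prod := by
  induction n with
  | zero => simp
  | succ n ih =>
    rw [show 2 * (n + 1) = 2 * n + 1 + 1 by ring, List.range_succ, List.range_succ,
      List.range_succ]
    simp only [List.map_append, List.prod_append, ih, List.map_cons, List.map_nil,
      List.prod_cons, List.prod_nil, mul_one, mul_assoc]

def cfMatrix (a : ℕ) : Matrix (Fin 2) (Fin 2) ℤ := !![(a : ℤ), 1; 1, 0]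

theorem Tm_pow (k : ℕ) : Tm ^ k = !![1, (k : ℤ); 0, 1] := by
  induction k with
  | zero => simp [Matrix.one_fin_two]
  | succ n ih => rw [pow_succ, ih, Tm]; simp [add_comm]

theorem Vm_pow (k : ℕ) : Vm ^ k = !![1, 0; (k : ℤ), 1] := by
  induction k with
  | zero => simp [Matrix.one_fin_two]
  | succ n ih => rw [pow_succ, ih, Vm]; simp

theorem Tm_pow_mul_Vm_pow (k m : ℕ) : Tm ^ k * Vm ^ m = !![(k : ℤ) * m + 1, k; m, 1] := by
  simp [Tm_pow, Vm_pow, add_comm]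

theorem cfMatrix_mul_cfMatrix (k m : ℕ) : cfMatrix k * cfMatrix m = Tm ^ k * Vm ^ m := by
  simp [Tm_pow_mul_Vm_pow, cfMatrix]

theorem det_Tm_pow_mul_Vm_pow (k m : ℕ) : (Tm ^ k * Vm ^ m).det = 1 := by
  simp [Tm_pow_mul_Vm_pow, Matrix.det_fin_two_of]

structure TopRowDominates (M : Matrix (Fin 2) (Fin 2) ℤ) : Prop where
  lower_left_pos : 0 < M 1 0
  lower_right_pos : 0 < M 1 1
  lower_left_lt : M 1 0 < M 0 0
  lower_right_le : M 1 1 ≤ M 0 1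

theorem TopRowDominates.mul {M N : Matrix (Fin 2) (Fin 2) ℤ} (hM : TopRowDominates M)
    (hN : TopRowDominates N) : TopRowDominates (M * N) := by
  obtain ⟨hM₁, hM₂, hM₃, hM₄⟩ := hM
  obtain ⟨hN₁, hN₂, hN₃, hN₄⟩ := hN
  constructor <;> simp only [Matrix.mul_apply, Fin.sum_univ_two] <;> nlinarith

theorem topRowDominates_Tm_pow_mul_Vm_pow {k m : ℕ} (hk : 1 ≤ k) (hm : 1 ≤ m) :
    TopRowDominates (Tm ^ k * Vm ^ m) := by
  rw [Tm_pow_mul_Vm_pow]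
  have hk' : (1 : ℤ) ≤ k := by exact_mod_cast hk
  have hm' : (1 : ℤ) ≤ m := by exact_mod_cast hm
  constructor <;>
    simp only [Matrix.of_apply, Matrix.cons_val', Matrix.cons_val_zero, Matrix.cons_val_one,
      Matrix.cons_val_fin_one] <;> nlinarith

theorem word_eq_prod_pairs (ℓ : ℕ) (c : ℕ → ℕ) :
    ((List.range (2 * ℓ)).map fun i => if i % 2 = 0 then Tm ^ c i else Vm ^ c i).prod =
      ((List.range ℓ).map fun i => Tm ^ c (2 * i) * Vm ^ c (2 * i + 1)).prod := by
  rw [List.prod_map_range_two_mul]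
  simp

theorem prod_cfMatrix_eq_prod_pairs (ℓ : ℕ) (c : ℕ → ℕ) :
    (((List.range (2 * ℓ)).map c).map cfMatrix).prod =
      ((List.range ℓ).map fun i => Tm ^ c (2 * i) * Vm ^ c (2 * i + 1)).prod := by
  rw [List.map_map, List.prod_map_range_two_mul]
  simp [cfMatrix_mul_cfMatrix]

theorem det_prod_pairs (ℓ : ℕ) (c : ℕ → ℕ) :
    ((List.range ℓ).map fun i => Tm ^ c (2 * i) * Vm ^ c (2 * i + 1)).prod.det = 1 := by
  rw [← Matrix.coe_detMonoidHom, map_list_prod, List.map_map]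
  refine List.prod_eq_one fun _ h => ?_
  obtain ⟨i, -, rfl⟩ := List.mem_map.1 h
  exact det_Tm_pow_mul_Vm_pow _ _

theorem topRowDominates_prod_pairs {ℓ : ℕ} (hℓ : 1 ≤ ℓ) {c : ℕ → ℕ}
    (hc : ∀ i < 2 * ℓ, 1 ≤ c i) :
    TopRowDominates ((List.range ℓ).map fun i => Tm ^ c (2 * i) * Vm ^ c (2 * i + 1)).prod := by
  refine List.prod_induction_nonempty _ (fun _ _ => TopRowDominates.mul) (by simp [Nat.one_le_iff_ne_zero.1 hℓ]) ?_
  simp only [List.mem_map, List.mem_range]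
  rintro _ ⟨i, hi, rfl⟩
  exact topRowDominates_Tm_pow_mul_Vm_pow (hc _ (by omega)) (hc _ (by omega))

noncomputable def moebius (M : Matrix (Fin 2) (Fin 2) ℤ) (x : ℝ) : ℝ :=
  ((M 0 0 : ℝ) * x + (M 0 1 : ℝ)) / ((M 1 0 : ℝ) * x + (M 1 1 : ℝ))

theorem cfMatrix_mul (a : ℕ) (N : Matrix (Fin 2) (Fin 2) ℤ) :
    cfMatrix a * N = !![a * N 0 0 + N 1 0, a * N 0 1 + N 1 1; N 0 0, N 0 1] := by
  ext i j
  fin_cases i <;> fin_cases j <;> simp [cfMatrix, Matrix.mul_apply]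

theorem moebius_cfMatrix_mul (a : ℕ) (N : Matrix (Fin 2) (Fin 2) ℤ) {x : ℝ}
    (hN : (N 0 0 : ℝ) * x + N 0 1 ≠ 0) :
    moebius (cfMatrix a * N) x = a + (moebius N x)⁻¹ := by
  rw [cfMatrix_mul, moebius, moebius, inv_div]
  simp only [Matrix.of_apply, Matrix.cons_val', Matrix.cons_val_zero, Matrix.cons_val_one,
    Matrix.cons_val_fin_one]
  push_cast
  field_simp
  ring

theorem prod_cfMatrix_rows_pos {x : ℝ} (hx : 0 < x) (l : List ℕ) (i : Fin 2) :
    0 < ((l.map cfMatrix).prod i 0 : ℝ) * x + (l.map cfMatrix).prod i 1 := by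
  induction l generalizing i with
  | nil => fin_cases i <;> simp [hx]
  | cons a l ih =>
    have h0 := ih 0
    have h1 := ih 1
    rw [List.map_cons, List.prod_cons, cfMatrix_mul]
    fin_cases i
    · simp only [Matrix.of_apply, Matrix.cons_val', Matrix.cons_val_zero, Matrix.cons_val_one,
        Matrix.cons_val_fin_one]
      push_cast
      nlinarith
    · simpa using h0

theorem cfVal_eq_moebius {x : ℝ} (hx : 0 < x) (l : List ℕ) :
    cfVal l x = moebius (l.map cfMatrix).prod x := by
  induction l with
  | nil => simp [cfVal, moebius]
  | cons a l ih =>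
    rw [cfVal, ih, List.map_cons, List.prod_cons,
      moebius_cfMatrix_mul _ _ (prod_cfMatrix_rows_pos hx l 0).ne']

theorem not_isSquare_sq_sub_four {t : ℤ} (ht : 3 ≤ t) : ¬IsSquare (t ^ 2 - 4) := by
  rintro ⟨r, hr⟩
  have hlt : |r| < t := abs_lt_of_sq_lt_sq (by nlinarith) (by omega)
  have hgt : t - 1 < |r| := by
    simpa [abs_of_pos (by omega : 0 < t - 1)] using sq_lt_sq.1 (by nlinarith : (t - 1) ^ 2 < r ^ 2)
  omega

section FixedPoint

variable {a b c d w : ℝ} (hdet : a * d - b * c = 1)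
  (hw : w = ((a - d) + √((a + d) ^ 2 - 4)) / (2 * c))
include hdet hw

theorem quadratic_eq_zero_of_eq_root (hc : c ≠ 0) (hdisc : 0 ≤ (a + d) ^ 2 - 4) :
    c * w ^ 2 + (d - a) * w - b = 0 := by
  have hs : discrim c (d - a) (-b) = √((a + d) ^ 2 - 4) * √((a + d) ^ 2 - 4) := by
    rw [Real.mul_self_sqrt hdisc, discrim]
    linear_combination -4 * hdet
  have hroot := (quadratic_eq_zero_iff hc hs w).2 (Or.inl (by rw [hw]; ring))
  linear_combination hroot

theorem one_lt_of_eq_root (hc : 0 < c) (hcd : c + d < a + b) : 1 < w := by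
  have hs : 2 * c + d - a < √((a + d) ^ 2 - 4) :=
    Real.lt_sqrt_of_sq_lt (by nlinarith [mul_pos hc (sub_pos.2 hcd)])
  rw [hw, lt_div_iff₀ (by positivity)]
  linarith

end FixedPoint

theorem moebius_eq_self_of_quadratic (M : Matrix (Fin 2) (Fin 2) ℤ) {x : ℝ}
    (hden : (M 1 0 : ℝ) * x + M 1 1 ≠ 0)
    (hx : (M 1 0 : ℝ) * x ^ 2 + ((M 1 1 : ℝ) - M 0 0) * x - M 0 1 = 0) :
    moebius M x = x := by
  rw [moebius, div_eq_iff hden]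
  linear_combination -hx

/-- Given positive integers `c_1, …, c_{2ℓ}`, let
`γ = T^{c_1} V^{c_2} ⋯ T^{c_{2ℓ-1}} V^{c_{2ℓ}} = [[a, b], [c, d]]`.  Then `c > 0`, the
quadratic form `Q(x,y) = c x² + (d - a) x y - b y²` has positive non-square discriminant
`(a + d)² - 4`, and its root `w_Q = ((a - d) + √((a+d)² - 4))/(2c)` is the fixed point of
the Möbius action of `γ` greater than `1`, with purely periodic continued fraction
expansion `[overline{c_1, c_2, …, c_{2ℓ}}]`. -/
theorem stmt18 (ℓ : ℕ) (hℓ : 1 ≤ ℓ) (c : ℕ → ℕ) (hc : ∀ i < 2 * ℓ, 1 ≤ c i) :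
    let γ : Matrix (Fin 2) (Fin 2) ℤ :=
      ((List.range (2 * ℓ)).map fun i =>
        if i % 2 = 0 then Tm ^ c i else Vm ^ c i).prod
    let w : ℝ :=
      ((γ 0 0 - γ 1 1 : ℤ) + Real.sqrt (((γ 0 0 + γ 1 1) ^ 2 - 4 : ℤ) : ℝ)) / (2 * γ 1 0)
    0 < γ 1 0 ∧
    0 < (γ 0 0 + γ 1 1) ^ 2 - 4 ∧
    ¬ IsSquare ((γ 0 0 + γ 1 1) ^ 2 - 4) ∧
    1 < w ∧
    ((γ 0 0 : ℝ) * w + (γ 0 1 : ℝ)) / ((γ 1 0 : ℝ) * w + (γ 1 1 : ℝ)) = w ∧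
    (γ 1 0 : ℝ) * w ^ 2 + ((γ 1 1 : ℝ) - (γ 0 0 : ℝ)) * w - (γ 0 1 : ℝ) = 0 ∧
    cfVal ((List.range (2 * ℓ)).map c) w = w := by
  intro γ w
  have hpairs : γ = _ := word_eq_prod_pairs ℓ c
  have hγ : γ = (((List.range (2 * ℓ)).map c).map cfMatrix).prod := by
    rw [hpairs, prod_cfMatrix_eq_prod_pairs]
  obtain ⟨h10, h11, h00, h01⟩ : TopRowDominates γ := hpairs ▸ topRowDominates_prod_pairs hℓ hc
  have hdet : (γ 0 0 : ℝ) * γ 1 1 - γ 0 1 * γ 1 0 = 1 := by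
    have := det_prod_pairs ℓ c
    rw [← hpairs, Matrix.det_fin_two] at this
    exact_mod_cast this
  have htrace : 3 ≤ γ 0 0 + γ 1 1 := by omega
  have hdisc : 0 < (γ 0 0 + γ 1 1) ^ 2 - 4 := by nlinarith
  have hw : w = ((γ 0 0 - γ 1 1 : ℝ) + √((γ 0 0 + γ 1 1 : ℝ) ^ 2 - 4)) / (2 * γ 1 0) := by
    simp only [w]
    push_cast
    rfl
  have hquad := quadratic_eq_zero_of_eq_root hdet hw (by positivity) (by exact_mod_cast hdisc.le)
  have hw1 : 1 < w := one_lt_of_eq_root hdet hw (by exact_mod_cast h10)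
    (by exact_mod_cast (by omega : γ 1 0 + γ 1 1 < γ 0 0 + γ 0 1))
  have hfix : moebius γ w = w := moebius_eq_self_of_quadratic γ (by positivity) hquad
  refine ⟨h10, hdisc, not_isSquare_sq_sub_four htrace, hw1, hfix, hquad, ?_⟩
  rw [cfVal_eq_moebius (by linarith), ← hγ, hfix]
end
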